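/- arXiv:1403.7571 — 2 statements merged into one kernel-verified Lean document; each statement's English description precedes it below -/
import Mathlib

section
/- Let A be an m×m matrix over ℤ[q,q⁻¹] and let l₁,…,l_r ∈ ℤ[q,q⁻¹]^m satisfy l_kᵀ^* A l_k = 1 − q for each k and l_iᵀ^* A l_j = 0 for all i ≠ j. If c₁,…,c_r are integers such that the vector Σ_k c_k l_k is divisible by (1−q) (i.e. equals (1−q)x for some vector x over ℤ[q,q⁻¹]), then c₁ = ⋯ = c_r = 0. In particular, the integer vectors l₁(1),…,l_r(1) obtained by evaluating at q = 1 are linearly independent over ℤ. -/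
/-!
Pairing `v = Σ c_k l_k` with itself gives `(Σ c_k²)(1 - q)` by orthogonality. If moreover
`v = (1 - q) x`, the same pairing equals `(1 - q⁻¹)(1 - q) ⟨x, x⟩`; cancelling `1 - q` and
evaluating at `q = 1`, where `1 - q⁻¹` vanishes, gives `Σ c_k² = 0`. Linear independence of the
`l_k(1)` follows because the kernel of evaluation at `q = 1` is the ideal generated by `1 - q`.
-/

open LaurentPolynomial Matrix

/-- The sesquilinear pairing `h₀ᵀ^* A h₁`, where `^*` is `q ↦ q⁻¹`. -/
noncomputable def pairL {m : ℕ} (A : Matrix (Fin m) (Fin m) (LaurentPolynomial ℤ))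
    (h₀ h₁ : Fin m → LaurentPolynomial ℤ) : LaurentPolynomial ℤ :=
  dotProduct (fun i => invert (h₀ i)) (A.mulVec h₁)

/-- Evaluation of a Laurent polynomial at `q = 1` (the sum of its coefficients). -/
def evalOne (f : LaurentPolynomial ℤ) : ℤ := f.coeff.sum fun _ c => c

namespace LaurentPolynomial

variable {R : Type*}

theorem eval₂_one_toLaurent [CommSemiring R] (p : Polynomial R) :
    eval₂ (RingHom.id R) 1 p.toLaurent = p.eval 1 := by
  rw [eval₂_toLaurent, Units.val_one, Polynomial.eval₂_id]

theorem one_sub_T_one_dvd_iff [CommRing R] {f : R[T;T⁻¹]} :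
    1 - T 1 ∣ f ↔ eval₂ (RingHom.id R) 1 f = 0 := by
  refine ⟨fun ⟨g, hg⟩ => by simp [hg], fun hf => ?_⟩
  obtain ⟨n, p, hp⟩ := f.exists_T_pow
  have hroot : p.IsRoot 1 := by
    rw [Polynomial.IsRoot, ← eval₂_one_toLaurent, hp, map_mul, hf, zero_mul]
  obtain ⟨g, hg⟩ := Polynomial.dvd_iff_isRoot.mpr hroot
  have hf' : f = p.toLaurent * T (-n) := by
    rw [hp, mul_assoc, ← T_add, add_neg_cancel, T_zero, mul_one]
  refine ⟨-(g.toLaurent * T (-n)), ?_⟩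
  rw [hf', hg]
  simp only [map_mul, map_sub, Polynomial.toLaurent_X, map_one]
  ring

theorem one_sub_T_one_ne_zero [CommRing R] [Nontrivial R] : (1 - T 1 : R[T;T⁻¹]) ≠ 0 := by
  have : (1 - T 1 : R[T;T⁻¹]) = Polynomial.toLaurent (-(Polynomial.X - Polynomial.C 1)) := by
    simp
  rw [this, Polynomial.toLaurent_ne_zero, neg_ne_zero]
  exact Polynomial.X_sub_C_ne_zero 1

end LaurentPolynomial

theorem evalOne_eq_eval₂ (f : ℤ[T;T⁻¹]) : evalOne f = eval₂ (RingHom.id ℤ) 1 f := by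
  induction f using LaurentPolynomial.induction_on' with
  | add p q hp hq => simp_all [evalOne, Finsupp.sum_add_index]
  | C_mul_T n a =>
    rw [← single_eq_C_mul_T, evalOne, AddMonoidAlgebra.coeff_single, Finsupp.sum_single_index rfl]
    simp

section Pairing

variable {m : ℕ} (A : Matrix (Fin m) (Fin m) ℤ[T;T⁻¹]) {ι : Type*}

theorem pairL_sum_left (s : Finset ι) (u : ι → Fin m → ℤ[T;T⁻¹])
    (v : Fin m → ℤ[T;T⁻¹]) : pairL A (∑ k ∈ s, u k) v = ∑ k ∈ s, pairL A (u k) v := by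
  simp only [pairL, dotProduct, Finset.sum_apply, map_sum, Finset.sum_mul]
  exact Finset.sum_comm

theorem pairL_sum_right (u : Fin m → ℤ[T;T⁻¹]) (s : Finset ι)
    (v : ι → Fin m → ℤ[T;T⁻¹]) : pairL A u (∑ k ∈ s, v k) = ∑ k ∈ s, pairL A u (v k) := by
  simp only [pairL, mulVec_sum, dotProduct_sum]

theorem pairL_smul_left (t : ℤ[T;T⁻¹]) (u v : Fin m → ℤ[T;T⁻¹]) :
    pairL A (t • u) v = invert t * pairL A u v := by
  simp only [pairL, dotProduct, Pi.smul_apply, smul_eq_mul, map_mul, Finset.mul_sum, mul_assoc]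

theorem pairL_smul_right (t : ℤ[T;T⁻¹]) (u v : Fin m → ℤ[T;T⁻¹]) :
    pairL A u (t • v) = t * pairL A u v := by
  simp only [pairL, mulVec_smul, dotProduct_smul, smul_eq_mul]

theorem pairL_sum_smul_of_pairwise_eq_zero [Fintype ι]
    {l : ι → Fin m → ℤ[T;T⁻¹]} (horth : ∀ i j, i ≠ j → pairL A (l i) (l j) = 0)
    (c : ι → ℤ[T;T⁻¹]) :
    pairL A (∑ k, c k • l k) (∑ k, c k • l k) = ∑ k, invert (c k) * c k * pairL A (l k) (l k) := by
  simp only [pairL_sum_left, pairL_sum_right, pairL_smul_left, pairL_smul_right]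
  refine Finset.sum_congr rfl fun i _ => ?_
  rw [Finset.sum_eq_single i (fun j _ hji => by simp [horth j i hji])
    (by simp), mul_left_comm, mul_assoc]

end Pairing

theorem eq_zero_of_sum_smul_eq_one_sub_T_smul {m : ℕ} {ι : Type*} [Fintype ι]
    (A : Matrix (Fin m) (Fin m) ℤ[T;T⁻¹]) {l : ι → Fin m → ℤ[T;T⁻¹]}
    (hself : ∀ k, pairL A (l k) (l k) = 1 - T 1)
    (horth : ∀ i j, i ≠ j → pairL A (l i) (l j) = 0) {c : ι → ℤ}
    {x : Fin m → ℤ[T;T⁻¹]} (hx : ∑ k, (c k : ℤ[T;T⁻¹]) • l k = (1 - T 1 : ℤ[T;T⁻¹]) • x) :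
    c = 0 := by
  have hgram : pairL A ((1 - T 1 : ℤ[T;T⁻¹]) • x) ((1 - T 1 : ℤ[T;T⁻¹]) • x)
      = (∑ k, c k * c k : ℤ) * (1 - T 1 : ℤ[T;T⁻¹]) := by
    rw [← hx, pairL_sum_smul_of_pairwise_eq_zero A horth]
    simp [hself, Finset.sum_mul]
  have hsum : ((∑ k, c k * c k : ℤ) : ℤ[T;T⁻¹]) = invert (1 - T 1 : ℤ[T;T⁻¹]) * pairL A x x := by
    rw [pairL_smul_left, pairL_smul_right] at hgram
    apply mul_right_cancel₀ one_sub_T_one_ne_zero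
    linear_combination -hgram
  have hsum_eval : ∑ k, c k * c k = 0 := by
    simpa using congrArg (eval₂ (RingHom.id ℤ) 1) hsum
  ext k
  exact (Finset.sum_mul_self_eq_zero_iff _ _).mp hsum_eval k (Finset.mem_univ k)

/-- If `l_kᵀ^* A l_k = 1 - q` for each `k` and `l_iᵀ^* A l_j = 0` for `i ≠ j`,
then any integer combination `Σ c_k l_k` which is divisible by `(1-q)` has all
`c_k = 0`; in particular the `l_k(1)` are linearly independent over `ℤ`. -/
theorem stmt3 {m r : ℕ} (A : Matrix (Fin m) (Fin m) (LaurentPolynomial ℤ))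
    (l : Fin r → Fin m → LaurentPolynomial ℤ)
    (hself : ∀ k, pairL A (l k) (l k) = 1 - T 1)
    (horth : ∀ i j, i ≠ j → pairL A (l i) (l j) = 0) :
    (∀ (c : Fin r → ℤ) (x : Fin m → LaurentPolynomial ℤ),
      (∀ i, ∑ k, (c k : LaurentPolynomial ℤ) * l k i = (1 - T 1) * x i) →
      ∀ k, c k = 0) ∧
    LinearIndependent ℤ (fun k => fun i => evalOne (l k i)) := by
  have hcoeffs : ∀ (c : Fin r → ℤ) (x : Fin m → ℤ[T;T⁻¹]),
      (∀ i, ∑ k, (c k : ℤ[T;T⁻¹]) * l k i = (1 - T 1) * x i) → ∀ k, c k = 0 :=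
    fun c x hx => congrFun <| eq_zero_of_sum_smul_eq_one_sub_T_smul A hself horth <|
      funext fun i => by simpa [Finset.sum_apply] using hx i
  refine ⟨hcoeffs, Fintype.linearIndependent_iff.mpr fun c hc => ?_⟩
  have hdvd : ∀ i, 1 - T 1 ∣ ∑ k, (c k : ℤ[T;T⁻¹]) * l k i := fun i => by
    rw [one_sub_T_one_dvd_iff, map_sum]
    simpa [evalOne_eq_eval₂] using congrFun hc i
  choose x hx using hdvd
  exact hcoeffs c x hx
end

section
/- Let n be odd and let a,b,m be as follows: 0 < a < b coprime, m = a+b. Let B_q be the cyclic band matrix over ℚ(q) (rational functions) with B_{ij} = −q if i−j ≡ −a mod m; 1−q if i−j ≡ −a+1,…,−1 mod m; 1+q if i=j; q−1 if i−j ≡ 1,…,a−1 mod m; −1 if i−j ≡ a mod m; 0 otherwise. Then over ℚ(q), the kernel of B_q is one-dimensional, spanned by (1,1,…,1). -/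
open Matrix

/-!
Write `B_q = P(q)` with `P` a circulant matrix of polynomials indexed by `ZMod (a + b)`. Its rows
sum to zero, so the constants lie in the kernel. Conversely, a kernel vector that is not constant
can be normalised to vanish at one index; clearing denominators and dividing by the largest power
of `q - 1` dividing all its entries gives a nonzero vector in the kernel of `P(1)`, still vanishing
at that index. But `P(1) u = 2u - u(· - a) - u(· + a)`, and since `a` is a unit mod `a + b` such a
harmonic `u` is constant: its increments `u(i + a) - u(i)` are `a`-periodic, hence constant, and
they sum to zero.
-/

open Polynomial Finset

/-- The entry of the cyclic band matrix (case `n` odd, `ε = −1`) over `ℚ(q)`, as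
a function of the difference `d = i − j ∈ ℤ/m`. -/
noncomputable def band16 (m a : ℕ) (d : ZMod m) : RatFunc ℚ :=
  if d = -(a : ZMod m) then -RatFunc.X
  else if ∃ t ∈ Finset.Ico 1 a, d = -(t : ZMod m) then 1 - RatFunc.X
  else if d = 0 then 1 + RatFunc.X
  else if ∃ t ∈ Finset.Ico 1 a, d = (t : ZMod m) then RatFunc.X - 1
  else if d = (a : ZMod m) then -1
  else 0

section Specialization

variable {K : Type*} [Field K] {m n : Type*} [Fintype n]

theorem exists_polynomial_mulVec_eq_zero (P : Matrix m n K[X]) (w : n → RatFunc K)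
    (hw : P.map (algebraMap K[X] (RatFunc K)) *ᵥ w = 0) :
    ∃ p : n → K[X], P *ᵥ p = 0 ∧ ∀ j, p j = 0 ↔ w j = 0 := by
  obtain ⟨c, hc⟩ := IsLocalization.exist_integer_multiples (nonZeroDivisors K[X]) univ w
  choose p hp using fun j => hc j (mem_univ j)
  set c' := algebraMap K[X] (RatFunc K) c
  have hc' : c' ≠ 0 := (map_ne_zero_iff _ (RatFunc.algebraMap_injective K)).2
    (nonZeroDivisors.coe_ne_zero c)
  have hp' : algebraMap K[X] (RatFunc K) ∘ p = c' • w := by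
    funext j
    simp [hp j, Algebra.smul_def, c']
  refine ⟨p, ?_, fun j => ?_⟩
  · funext i
    apply RatFunc.algebraMap_injective K
    rw [RingHom.map_mulVec, hp', mulVec_smul, hw, smul_zero]
    simp
  · rw [← (map_eq_zero_iff _ (RatFunc.algebraMap_injective K)), ← Function.comp_apply
      (f := algebraMap K[X] (RatFunc K)), hp', Pi.smul_apply, smul_eq_mul, mul_eq_zero,
      or_iff_right hc']

theorem exists_mulVec_eq_zero_eval_ne_zero (P : Matrix m n K[X]) {p : n → K[X]}
    (hp : P *ᵥ p = 0) (hp0 : p ≠ 0) (x : K) :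
    ∃ r : n → K[X], P *ᵥ r = 0 ∧ (∀ j, p j = 0 → r j = 0) ∧
      ∃ j, (r j).eval x ≠ 0 := by
  classical
  have hne : (univ.filter fun j => p j ≠ 0).Nonempty := by
    obtain ⟨j, hj⟩ := Function.ne_iff.1 hp0
    exact ⟨j, by simpa using hj⟩
  obtain ⟨j₀, hj₀, hmin⟩ := exists_min_image _ (fun j => rootMultiplicity x (p j)) hne
  set k := rootMultiplicity x (p j₀)
  have hj₀ : p j₀ ≠ 0 := (mem_filter.1 hj₀).2
  have hdvd : ∀ j, (X - C x) ^ k ∣ p j := by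
    intro j
    by_cases hj : p j = 0
    · simp [hj]
    · exact (le_rootMultiplicity_iff hj).1 (hmin j (by simpa using hj))
  choose r hr using hdvd
  have hXk : (X - C x) ^ k ≠ 0 := pow_ne_zero _ (X_sub_C_ne_zero x)
  refine ⟨r, ?_, fun j hj => ?_, j₀, fun h => ?_⟩
  · have : p = (X - C x) ^ k • r := funext hr
    rwa [this, mulVec_smul, smul_eq_zero, or_iff_right hXk] at hp
  · rwa [hr, mul_eq_zero, or_iff_right hXk] at hj
  · have : (X - C x) ^ (k + 1) ∣ p j₀ := by
      rw [hr, pow_succ]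
      exact mul_dvd_mul_left _ (dvd_iff_isRoot.2 h)
    have := (le_rootMultiplicity_iff hj₀).2 this
    omega

theorem exists_eval_mulVec_eq_zero (P : Matrix m n K[X]) {w : n → RatFunc K}
    (hw : P.map (algebraMap K[X] (RatFunc K)) *ᵥ w = 0) (hw0 : w ≠ 0) (x : K) :
    ∃ u : n → K, u ≠ 0 ∧ P.map (eval x) *ᵥ u = 0 ∧ ∀ j, w j = 0 → u j = 0 := by
  obtain ⟨p, hp, hpw⟩ := exists_polynomial_mulVec_eq_zero P w hw
  have hp0 : p ≠ 0 := fun h => hw0 (funext fun j => (hpw j).1 (congrFun h j))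
  obtain ⟨r, hr, hpr, j₀, hj₀⟩ := exists_mulVec_eq_zero_eval_ne_zero P hp hp0 x
  refine ⟨fun j => (r j).eval x, Function.ne_iff.2 ⟨j₀, hj₀⟩, ?_, fun j hj => ?_⟩
  · funext i
    rw [← coe_evalRingHom, ← Function.comp_def, ← RingHom.map_mulVec, hr]
    simp
  · simp [hpr j ((hpw j).2 hj)]

theorem mulVec_map_algebraMap_eq_zero_iff (P : Matrix n n K[X]) (x : K)
    (hP : P *ᵥ (fun _ => 1) = 0)
    (hPx : ∀ u : n → K, P.map (eval x) *ᵥ u = 0 → ∃ c, u = fun _ => c)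
    (w : n → RatFunc K) :
    P.map (algebraMap K[X] (RatFunc K)) *ᵥ w = 0 ↔ ∃ c, w = fun _ => c := by
  have hconst : ∀ c, P.map (algebraMap K[X] (RatFunc K)) *ᵥ (fun _ => c) = 0 := by
    intro c
    have : (fun _ : n => c) = c • (algebraMap K[X] (RatFunc K) ∘ fun _ => 1) := by
      funext; simp
    funext i
    rw [this, mulVec_smul, Pi.smul_apply, ← RingHom.map_mulVec, hP]
    simp
  refine ⟨fun hw => ?_, fun ⟨c, hc⟩ => hc ▸ hconst c⟩
  cases isEmpty_or_nonempty n with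
  | inl _ => exact ⟨0, funext isEmptyElim⟩
  | inr hn =>
    obtain ⟨j₀⟩ := hn
    refine ⟨w j₀, sub_eq_zero.1 (by_contra fun hw' => ?_)⟩
    obtain ⟨u, hu0, hu, hzero⟩ := exists_eval_mulVec_eq_zero P
      (by rw [mulVec_sub, hw, hconst, sub_zero]) hw' x
    obtain ⟨c, rfl⟩ := hPx u hu
    exact hu0 (funext fun _ => hzero j₀ (sub_self _))

end Specialization

namespace ZMod

variable {m : ℕ}

def finEquivNatCast (m : ℕ) [NeZero m] : Fin m ≃ ZMod m where
  toFun i := (i : ℕ)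
  invFun d := ⟨d.val, d.val_lt⟩
  left_inv i := Fin.ext (val_cast_of_lt i.isLt)
  right_inv := natCast_zmod_val

theorem sum_eq_sum_range [NeZero m] {M : Type*} [AddCommMonoid M] (f : ZMod m → M) :
    ∑ d, f d = ∑ k ∈ range m, f k :=
  ((finEquivNatCast m).sum_comp f).symm.trans (Fin.sum_univ_eq_sum_range (fun k => f k) m)

theorem natCast_eq_natCast_iff_of_lt {k t : ℕ} (hk : k < m) (ht : t < m) :
    (k : ZMod m) = t ↔ k = t := by
  rw [natCast_eq_natCast_iff', Nat.mod_eq_of_lt hk, Nat.mod_eq_of_lt ht]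

theorem natCast_eq_neg_natCast_iff_of_lt {k t : ℕ} (hk : k < m) (ht : t < m) (hkt : 0 < k + t) :
    (k : ZMod m) = -t ↔ k + t = m := by
  rw [eq_neg_iff_add_eq_zero, ← Nat.cast_add, natCast_eq_zero_iff]
  exact ⟨fun h => Nat.eq_of_dvd_of_lt_two_mul (by omega) h (by omega), fun h => h ▸ dvd_rfl⟩

variable {a : ZMod m}

theorem apply_eq_apply_of_periodic {α : Type*} {f : ZMod m → α} (hf : Function.Periodic f a)
    (ha : IsUnit a) (i j : ZMod m) : f i = f j := by
  obtain ⟨b, hb⟩ := ha.exists_left_inv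
  obtain ⟨n, hn⟩ := intCast_surjective (n := m) ((j - i) * b)
  have hji : j = i + n • a := by
    rw [zsmul_eq_mul, hn, mul_assoc, hb, mul_one, add_sub_cancel]
  rw [hji, hf.zsmul n i]

theorem apply_eq_apply_of_harmonic [NeZero m] {M : Type*} [AddCommGroup M] [IsAddTorsionFree M]
    {u : ZMod m → M} (ha : IsUnit a) (hu : ∀ i, u (i + a) + u (i - a) = 2 • u i)
    (i j : ZMod m) : u i = u j := by
  set δ := fun i => u (i + a) - u i
  have hδ : Function.Periodic δ a := by
    intro i
    have := hu (i + a)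
    rw [add_sub_cancel_right, two_nsmul] at this
    exact sub_eq_sub_iff_add_eq_add.2 this
  have hsum : m • δ 0 = m • 0 := by
    calc m • δ 0 = ∑ i, δ i := by
          rw [sum_congr rfl fun i _ => apply_eq_apply_of_periodic hδ ha i 0, sum_const,
            card_univ, ZMod.card]
      _ = m • 0 := by
          simp only [δ, sum_sub_distrib, smul_zero]
          exact sub_eq_zero.2 (Equiv.sum_comp (Equiv.addRight a) u)
  have hδ0 : δ 0 = 0 := IsAddTorsionFree.nsmul_right_injective (NeZero.ne m) hsum
  have hu_periodic : Function.Periodic u a := fun i =>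
    sub_eq_zero.1 ((apply_eq_apply_of_periodic hδ ha i 0).trans hδ0)
  exact apply_eq_apply_of_periodic hu_periodic ha i j

end ZMod

theorem Matrix.circulant_mulVec_apply {m : ℕ} [NeZero m] {R : Type*} [NonUnitalNonAssocSemiring R]
    (f u : ZMod m → R) (i : ZMod m) :
    (circulant f *ᵥ u) i = ∑ k ∈ range m, f k * u (i - k) := by
  rw [← ZMod.sum_eq_sum_range (fun d => f d * u (i - d)), mulVec, dotProduct,
    ← (Equiv.subLeft i).sum_comp]
  simp [circulant_apply]

section Band

variable {a b : ℕ}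

-- The entry of `B_q` at `i - j ≡ k`, `0 ≤ k < a + b`: the residues `-a` and `-t` (`0 < t < a`)
-- are `k = b` and `k = a + b - t`.
noncomputable def bandEntry (a b k : ℕ) : ℚ[X] :=
  if k = b then -X
  else if b < k then 1 - X
  else if k = 0 then 1 + X
  else if 1 ≤ k ∧ k < a then X - 1
  else if k = a then -1
  else 0

theorem band16_natCast (ha : 0 < a) (hab : a < b) {k : ℕ} (hk : k < a + b) :
    band16 (a + b) a k = algebraMap ℚ[X] (RatFunc ℚ) (bandEntry a b k) := by
  have h₁ : (k : ZMod (a + b)) = -a ↔ k = b := by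
    rw [ZMod.natCast_eq_neg_natCast_iff_of_lt hk (by omega) (by omega)]; omega
  have h₂ : (∃ t ∈ Ico 1 a, (k : ZMod (a + b)) = -t) ↔ b < k := by
    constructor
    · rintro ⟨t, ht, h⟩
      rw [mem_Ico] at ht
      rw [ZMod.natCast_eq_neg_natCast_iff_of_lt hk (by omega) (by omega)] at h
      omega
    · intro h
      refine ⟨a + b - k, mem_Ico.2 (by omega), ?_⟩
      rw [ZMod.natCast_eq_neg_natCast_iff_of_lt hk (by omega) (by omega)]
      omega
  have h₃ : (k : ZMod (a + b)) = 0 ↔ k = 0 := by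
    rw [← Nat.cast_zero, ZMod.natCast_eq_natCast_iff_of_lt hk (by omega)]
  have h₄ : (∃ t ∈ Ico 1 a, (k : ZMod (a + b)) = t) ↔ 1 ≤ k ∧ k < a := by
    constructor
    · rintro ⟨t, ht, h⟩
      rw [mem_Ico] at ht
      rw [ZMod.natCast_eq_natCast_iff_of_lt hk (by omega)] at h
      omega
    · exact fun h => ⟨k, mem_Ico.2 h, rfl⟩
  have h₅ : (k : ZMod (a + b)) = a ↔ k = a := ZMod.natCast_eq_natCast_iff_of_lt hk (by omega)
  rw [band16, bandEntry]
  simp only [h₁, h₂, h₃, h₄, h₅]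
  split_ifs <;> simp

theorem sum_range_bandEntry (ha : 0 < a) (hab : a < b) :
    ∑ k ∈ range (a + b), bandEntry a b k = 0 := by
  rw [range_eq_Ico,
    ← sum_Ico_consecutive _ (by omega : 0 ≤ b + 1) (by omega : b + 1 ≤ a + b),
    ← sum_Ico_consecutive _ (by omega : 0 ≤ b) (by omega : b ≤ b + 1),
    ← sum_Ico_consecutive _ (by omega : 0 ≤ a + 1) (by omega : a + 1 ≤ b),
    ← sum_Ico_consecutive _ (by omega : 0 ≤ a) (by omega : a ≤ a + 1),
    ← sum_Ico_consecutive _ (by omega : 0 ≤ 1) (by omega : 1 ≤ a),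
    sum_eq_card_nsmul (b := 1 + X), sum_eq_card_nsmul (b := X - 1),
    sum_eq_card_nsmul (b := -1), sum_eq_card_nsmul (b := 0),
    sum_eq_card_nsmul (b := -X), sum_eq_card_nsmul (b := 1 - X)]
  · simp only [Nat.card_Ico, add_tsub_cancel_left, show a + b - (b + 1) = a - 1 by omega]
    ring
  all_goals
    intro k hk
    rw [mem_Ico] at hk
    unfold bandEntry
    split_ifs <;> first | rfl | omega

theorem eval_one_bandEntry (ha : 0 < a) (hab : a < b) (k : ℕ) :
    (bandEntry a b k).eval 1 =
      (if k = 0 then 2 else 0) - (if k = a then 1 else 0) - (if k = b then 1 else 0) := by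
  unfold bandEntry
  split_ifs <;> first | omega | norm_num

end Band

section BandMatrix

variable {a b : ℕ}

noncomputable def bandMatrix (a b : ℕ) : Matrix (ZMod (a + b)) (ZMod (a + b)) ℚ[X] :=
  circulant fun d => bandEntry a b d.val

theorem map_bandMatrix (ha : 0 < a) (hab : a < b) :
    (bandMatrix a b).map (algebraMap ℚ[X] (RatFunc ℚ)) = circulant (band16 (a + b) a) := by
  have : NeZero (a + b) := ⟨by omega⟩
  rw [bandMatrix, map_circulant]
  congr
  funext d
  rw [← band16_natCast ha hab d.val_lt, ZMod.natCast_zmod_val]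

theorem bandMatrix_mulVec_one (ha : 0 < a) (hab : a < b) [NeZero (a + b)] :
    bandMatrix a b *ᵥ (fun _ => 1) = 0 := by
  funext i
  rw [bandMatrix, circulant_mulVec_apply, Pi.zero_apply, ← sum_range_bandEntry ha hab]
  exact sum_congr rfl fun k hk => by rw [ZMod.val_cast_of_lt (mem_range.1 hk), mul_one]

theorem map_eval_one_bandMatrix_mulVec_apply (ha : 0 < a) (hab : a < b) [NeZero (a + b)]
    (u : ZMod (a + b) → ℚ) (i : ZMod (a + b)) :
    ((bandMatrix a b).map (eval 1) *ᵥ u) i = 2 * u i - u (i - a) - u (i + a) := by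
  have hb : i - (b : ZMod (a + b)) = i + a := by
    rw [sub_eq_iff_eq_add, add_assoc, ← Nat.cast_add, ZMod.natCast_self, add_zero]
  rw [bandMatrix, map_circulant, circulant_mulVec_apply]
  rw [sum_congr rfl fun k hk => by
    rw [ZMod.val_cast_of_lt (mem_range.1 hk), eval_one_bandEntry ha hab]]
  simp [sub_mul, sum_sub_distrib, ha, ha.trans hab, hb]

theorem eq_const_of_map_eval_one_bandMatrix_mulVec_eq_zero (ha : 0 < a) (hab : a < b)
    [NeZero (a + b)] (hcop : Nat.Coprime a b) (u : ZMod (a + b) → ℚ)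
    (hu : (bandMatrix a b).map (eval 1) *ᵥ u = 0) :
    ∃ c, u = fun _ => c := by
  have hunit : IsUnit (a : ZMod (a + b)) :=
    (ZMod.isUnit_iff_coprime a (a + b)).2 (Nat.coprime_self_add_right.2 hcop)
  refine ⟨u 0, funext fun i => ZMod.apply_eq_apply_of_harmonic hunit (fun j => ?_) i 0⟩
  have := congrFun hu j
  rw [map_eval_one_bandMatrix_mulVec_apply ha hab, Pi.zero_apply] at this
  rw [two_nsmul]
  linarith

end BandMatrix

/-- For `n` odd and coprime `0 < a < b`, the kernel over `ℚ(q)` of the cyclic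
band matrix `B_q` is one-dimensional, spanned by `(1,…,1)`. -/
theorem stmt16 (a b : ℕ) (ha : 0 < a) (hab : a < b) (hcop : Nat.Coprime a b)
    (B : Matrix (Fin (a + b)) (Fin (a + b)) (RatFunc ℚ))
    (hB : ∀ i j : Fin (a + b),
      B i j = band16 (a + b) a ((i : ZMod (a + b)) - (j : ZMod (a + b)))) :
    ∀ v : Fin (a + b) → RatFunc ℚ,
      B.mulVec v = 0 ↔ ∃ c : RatFunc ℚ, v = fun _ => c := by
  have : NeZero (a + b) := ⟨by omega⟩
  set e := ZMod.finEquivNatCast (a + b)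
  have hB' : B = ((bandMatrix a b).map (algebraMap ℚ[X] (RatFunc ℚ))).submatrix e e := by
    ext i j
    rw [hB, map_bandMatrix ha hab]
    rfl
  intro v
  rw [hB', submatrix_mulVec_equiv, ← Pi.zero_comp e, e.surjective.injective_comp_right.eq_iff,
    mulVec_map_algebraMap_eq_zero_iff _ 1 (bandMatrix_mulVec_one ha hab)
      (eq_const_of_map_eval_one_bandMatrix_mulVec_eq_zero ha hab hcop)]
  refine exists_congr fun c => ⟨fun h => ?_, fun h => h ▸ rfl⟩
  funext i
  simpa using congrFun h (e i)
end
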